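/- For every n ≠ 2 and every bipartite graph H, the direct product Kₙ × H is type I, i.e., χ''(Kₙ × H) = (n−1)Δ(H) + 1 (when n ≥ 3 and H has an edge). -/

import Mathlib

open SimpleGraph

variable {V : Type*} {W : Type*}

/-- The direct (tensor) product of two simple graphs. -/
def tensorProd (G : SimpleGraph V) (H : SimpleGraph W) : SimpleGraph (V × W) where
  Adj a b := G.Adj a.1 b.1 ∧ H.Adj a.2 b.2
  symm := ⟨fun _ _ h => ⟨G.adj_symm h.1, H.adj_symm h.2⟩⟩
  loopless := ⟨fun _ h => G.irrefl h.1⟩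

instance tensorProd.adjDecidable (G : SimpleGraph V) (H : SimpleGraph W)
    [DecidableRel G.Adj] [DecidableRel H.Adj] : DecidableRel (tensorProd G H).Adj :=
  fun a b => (instDecidableAnd : Decidable (G.Adj a.1 b.1 ∧ H.Adj a.2 b.2))

/-- A proper edge colouring with `n` colours, given as a symmetric function on adjacent pairs. -/
def IsEdgeColoring (G : SimpleGraph V) (n : ℕ) (ce : V → V → Fin n) : Prop :=
  (∀ u v, G.Adj u v → ce u v = ce v u) ∧
  (∀ u v w, G.Adj u v → G.Adj u w → v ≠ w → ce u v ≠ ce u w)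

/-- A proper total colouring with `n` colours. -/
def IsTotalColoring (G : SimpleGraph V) (n : ℕ) (cv : V → Fin n) (ce : V → V → Fin n) : Prop :=
  (∀ u v, G.Adj u v → ce u v = ce v u) ∧
  (∀ u v, G.Adj u v → cv u ≠ cv v) ∧
  (∀ u v w, G.Adj u v → G.Adj u w → v ≠ w → ce u v ≠ ce u w) ∧
  (∀ u v, G.Adj u v → ce u v ≠ cv u ∧ ce u v ≠ cv v)

/-- The total chromatic number of a graph. -/
noncomputable def totalChromaticNumber (G : SimpleGraph V) : ℕ :=
  sInf {n | ∃ cv ce, IsTotalColoring G n cv ce}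

/-- Adjacency of the crown graph. -/
def crownAdj {m : ℕ} : Fin m ⊕ Fin m → Fin m ⊕ Fin m → Prop
  | Sum.inl k, Sum.inr t => k ≠ t
  | Sum.inr k, Sum.inl t => k ≠ t
  | _, _ => False

/-- The crown graph `J_{2m}`: `K_{m,m}` minus a perfect matching. -/
def crown (m : ℕ) : SimpleGraph (Fin m ⊕ Fin m) where
  Adj := crownAdj
  symm := ⟨by rintro (k|k) (t|t) h <;> simp only [crownAdj] at * <;> exact fun e => h e.symm⟩
  loopless := ⟨by rintro (k|k) h <;> simp only [crownAdj] at h⟩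

instance crown.adjDecidable (m : ℕ) : DecidableRel (crown m).Adj := fun a b =>
  match a, b with
  | Sum.inl k, Sum.inr t => (inferInstance : Decidable (k ≠ t))
  | Sum.inr k, Sum.inl t => (inferInstance : Decidable (k ≠ t))
  | Sum.inl _, Sum.inl _ => isFalse (fun h => h)
  | Sum.inr _, Sum.inr _ => isFalse (fun h => h)


/-!
A vertex `(i, w)` of `Kₙ × H` with `deg w = Δ` has degree `(n - 1)Δ`, and it and its edges
need pairwise distinct colours. Conversely, colour the edges of `H` properly by `x` with `Δ`
colours (König: pad `H` to a `Δ`-regular bipartite multigraph and peel off perfect matchings,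
which exist by Hall), and take a Latin square `S` of order `n` whose diagonal is a transversal
(the addition table of `ZMod n` for odd `n`, a prolongation of the one of `ZMod (n - 1)` for
even `n ≠ 2`). Give the vertex `(i, w)` the colour `(0, S i i)` and the edge between `(i, w)`
and `(j, w')`, with `w` on side `0` of `H`, the colour `(x w w', S i j)` if `x w w' = 0` and
`(x w w', j - i)` otherwise. Only the `(n - 1)Δ + 1` pairs `(a, b)` with `a = 0` or `b ≠ 0`
occur.
-/

section LatinSquare

variable {α β R : Type*}

structure IsLatinSquareWithTransversalDiagonal (S : α → α → α) : Prop where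
  row_injective : ∀ i, Function.Injective (S i)
  col_injective : ∀ j, Function.Injective fun i => S i j
  diag_injective : Function.Injective fun i => S i i

lemma IsLatinSquareWithTransversalDiagonal.equiv {S : α → α → α}
    (hS : IsLatinSquareWithTransversalDiagonal S) (e : α ≃ β) :
    IsLatinSquareWithTransversalDiagonal fun i j => e (S (e.symm i) (e.symm j)) where
  row_injective i := e.injective.comp ((hS.row_injective (e.symm i)).comp e.symm.injective)
  col_injective j := e.injective.comp ((hS.col_injective (e.symm j)).comp e.symm.injective)
  diag_injective := e.injective.comp (hS.diag_injective.comp e.symm.injective)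

lemma isLatinSquareWithTransversalDiagonal_add [CommRing R] (h2 : IsUnit (2 : R)) :
    IsLatinSquareWithTransversalDiagonal fun a b : R => a + b where
  row_injective := add_right_injective
  col_injective := add_left_injective
  diag_injective a b h := h2.mul_right_injective (by simpa only [two_mul] using h)

/-- The addition table of `R` with its cells `(a, a + 1)` moved to a new row and column. -/
def addTableProlongation [CommRing R] [DecidableEq R] : Option R → Option R → Option R
  | some a, some b => if b = a + 1 then none else some (a + b)
  | some a, none => some (2 * a + 1)
  | none, some b => some (2 * b - 1)
  | none, none => none

lemma isLatinSquareWithTransversalDiagonal_addTableProlongation [CommRing R] [DecidableEq R]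
    (h2 : IsUnit (2 : R)) (h1 : (1 : R) ≠ 0) :
    IsLatinSquareWithTransversalDiagonal (addTableProlongation (R := R)) := by
  have cancel : ∀ a b : R, 2 * a = 2 * b → a = b := fun _ _ => h2.mul_right_injective.eq_iff.mp
  refine ⟨?_, ?_, ?_⟩
  · rintro (_ | a) (_ | b) (_ | b') h <;> simp [addTableProlongation] at h ⊢
    all_goals (try split_ifs at h) <;> grind
  · rintro (_ | b) (_ | a) (_ | a') h <;> simp [addTableProlongation] at h ⊢
    all_goals (try split_ifs at h) <;> grind
  · rintro (_ | a) (_ | a') h <;> simp [addTableProlongation, h1] at h ⊢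
    exact cancel _ _ (by rwa [two_mul, two_mul])

end LatinSquare

lemma IsLatinSquareWithTransversalDiagonal.exists_fin {α : Type*} [Fintype α] {S : α → α → α}
    (hS : IsLatinSquareWithTransversalDiagonal S) {n : ℕ} (hα : Fintype.card α = n) :
    ∃ S' : Fin n → Fin n → Fin n, IsLatinSquareWithTransversalDiagonal S' :=
  ⟨_, hS.equiv (Fintype.equivFinOfCardEq hα)⟩

lemma isUnit_two_zmod_odd (k : ℕ) : IsUnit (2 : ZMod (2 * k + 1)) := by
  simpa using (ZMod.isUnit_iff_coprime 2 (2 * k + 1)).mpr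
    (Nat.coprime_two_left.mpr (odd_two_mul_add_one k))

lemma exists_isLatinSquareWithTransversalDiagonal {n : ℕ} (hn : n ≠ 2) :
    ∃ S : Fin n → Fin n → Fin n, IsLatinSquareWithTransversalDiagonal S := by
  obtain ⟨k, rfl | rfl⟩ := n.even_or_odd'
  · rcases k with _ | k
    · exact ⟨finZeroElim, finZeroElim, finZeroElim, finZeroElim⟩
    have : Fact (1 < 2 * k + 1) := ⟨by omega⟩
    refine (isLatinSquareWithTransversalDiagonal_addTableProlongation
      (isUnit_two_zmod_odd k) one_ne_zero).exists_fin ?_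
    simp only [Fintype.card_option, ZMod.card]
    ring
  · exact (isLatinSquareWithTransversalDiagonal_add (isUnit_two_zmod_odd k)).exists_fin
      (ZMod.card _)

section Konig

open Finset

variable {α : Type*} [Fintype α] [DecidableEq α]

lemma exists_perm_forall_pos_of_sum_eq {k : ℕ} (hk : 0 < k) {M : α → α → ℕ}
    (hrow : ∀ i, ∑ j, M i j = k) (hcol : ∀ j, ∑ i, M i j = k) :
    ∃ σ : Equiv.Perm α, ∀ i, 0 < M i (σ i) := by
  let supp (i : α) : Finset α := {j | 0 < M i j}
  have hall (s : Finset α) : #s ≤ #(s.biUnion supp) := by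
    have hsupp (i : α) (hi : i ∈ s) : ∑ j ∈ s.biUnion supp, M i j = k := by
      rw [← hrow i]
      refine sum_subset (subset_univ _) fun j _ hj => ?_
      by_contra hpos
      exact hj (mem_biUnion.mpr ⟨i, hi, by simpa [supp] using Nat.pos_of_ne_zero hpos⟩)
    refine Nat.le_of_mul_le_mul_left ?_ hk
    calc k * #s = ∑ i ∈ s, ∑ j ∈ s.biUnion supp, M i j := by simp [sum_congr rfl hsupp, mul_comm]
      _ = ∑ j ∈ s.biUnion supp, ∑ i ∈ s, M i j := sum_comm
      _ ≤ ∑ j ∈ s.biUnion supp, ∑ i, M i j :=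
        sum_le_sum fun j _ => sum_le_sum_of_subset (subset_univ s)
      _ = k * #(s.biUnion supp) := by simp [hcol, mul_comm]
  obtain ⟨σ, hσ, hpos⟩ := (all_card_le_biUnion_card_iff_exists_injective supp).mp hall
  exact ⟨Equiv.ofBijective σ (Finite.injective_iff_bijective.mp hσ),
    fun i => by simpa [supp] using hpos i⟩

lemma exists_perms_of_sum_eq (k : ℕ) (M : α → α → ℕ)
    (hrow : ∀ i, ∑ j, M i j = k) (hcol : ∀ j, ∑ i, M i j = k) :
    ∃ σ : Fin k → Equiv.Perm α, ∀ i j, 0 < M i j → ∃ l, σ l i = j := by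
  induction k generalizing M with
  | zero =>
    refine ⟨finZeroElim, fun i j hij => ?_⟩
    have := hrow i ▸ single_le_sum (fun j _ => Nat.zero_le (M i j)) (mem_univ j)
    omega
  | succ k ih =>
    obtain ⟨τ, hτ⟩ := exists_perm_forall_pos_of_sum_eq k.succ_pos hrow hcol
    let P (i j : α) : ℕ := if τ i = j then 1 else 0
    have hP (i j : α) : P i j ≤ M i j := by
      by_cases h : τ i = j
      · subst h
        simpa [P, Nat.one_le_iff_ne_zero] using (hτ i).ne'
      · simp [P, h]
    obtain ⟨σ, hσ⟩ := ih (fun i j => M i j - P i j)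
      (fun i => by simp [sum_tsub_distrib _ fun j _ => hP i j, hrow, P])
      (fun j => by
        rw [sum_tsub_distrib _ fun i _ => hP i j, hcol]
        simp [P, ← τ.eq_symm_apply])
    refine ⟨Fin.cons τ σ, fun i j hij => ?_⟩
    by_cases h : τ i = j
    · exact ⟨0, h⟩
    · obtain ⟨l, hl⟩ := hσ i j (by simpa [P, h] using hij)
      exact ⟨l.succ, hl⟩

/-- The biadjacency matrix of a `k`-regular bipartite multigraph containing the one of `M`:
two copies of `M`, the second one transposed, joined along a diagonal of padding edges. -/
def regularExtension (k : ℕ) (M : α → α → ℕ) : α ⊕ α → α ⊕ α → ℕ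
  | .inl i, .inl j => M i j
  | .inr j, .inr i => M i j
  | .inl i, .inr i' => if i = i' then k - ∑ j, M i j else 0
  | .inr j, .inl j' => if j = j' then k - ∑ i, M i j else 0

lemma exists_perms_of_sum_le {k : ℕ} (M : α → α → ℕ)
    (hrow : ∀ i, ∑ j, M i j ≤ k) (hcol : ∀ j, ∑ i, M i j ≤ k) :
    ∃ σ : Fin k → Equiv.Perm (α ⊕ α), ∀ i j, 0 < M i j → ∃ l, σ l (.inl i) = .inl j := by
  obtain ⟨σ, hσ⟩ := exists_perms_of_sum_eq k (regularExtension k M)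
    (by rintro (i | j) <;> simp [regularExtension, Fintype.sum_sum_type, hrow, hcol])
    (by rintro (j | i) <;> simp [regularExtension, Fintype.sum_sum_type, hrow, hcol])
  exact ⟨σ, fun i j => hσ (.inl i) (.inl j)⟩

end Konig

lemma SimpleGraph.Coloring.eq_zero_iff_ne_zero {H : SimpleGraph W} (c : H.Coloring (Fin 2))
    {w w' : W} (h : H.Adj w w') : c w = 0 ↔ c w' ≠ 0 := by
  have := c.valid h
  omega

theorem exists_isEdgeColoring_of_colorable_two [Fintype W] {H : SimpleGraph W}
    [DecidableRel H.Adj] {k : ℕ} [NeZero k] (hH : H.Colorable 2) (hk : H.maxDegree ≤ k) :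
    ∃ ce, IsEdgeColoring H k ce := by
  classical
  obtain ⟨c⟩ := hH
  let M (w w' : W) : ℕ := if H.Adj w w' then 1 else 0
  have hdeg (w : W) : ∑ w', M w w' ≤ k := by
    simpa [M, ← card_neighborFinset_eq_degree, neighborFinset_eq_filter]
      using (H.degree_le_maxDegree w).trans hk
  obtain ⟨σ, hσ⟩ := exists_perms_of_sum_le M hdeg (by simpa only [M, H.adj_comm] using hdeg)
  let pick (w w' : W) : Fin k := Classical.epsilon fun l => σ l (.inl w) = .inl w'
  have hpick {w w' : W} (h : H.Adj w w') : σ (pick w w') (.inl w) = .inl w' :=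
    Classical.epsilon_spec (hσ w w' (by simp [M, h]))
  -- an edge gets the index of a matching containing it, read from its end on side `0`
  refine ⟨fun w w' => if c w = 0 then pick w w' else pick w' w, fun w w' h => ?_,
    fun u v w huv huw hvw heq => ?_⟩
  · by_cases hw : c w = 0
    · simp [hw, (c.eq_zero_iff_ne_zero h).mp hw]
    · simp [hw, (c.eq_zero_iff_ne_zero h.symm).mpr hw]
  · by_cases hu : c u = 0
    · simp only [hu, if_true] at heq
      exact hvw (Sum.inl_injective ((hpick huv).symm.trans (heq ▸ hpick huw)))
    · simp only [hu, if_false] at heq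
      exact hvw (Sum.inl_injective ((σ _).injective
        ((hpick huv.symm).trans (heq ▸ hpick huw.symm).symm)))

section TotalColoring

variable {κ : Type*} {G : SimpleGraph V}

def IsTotalColoringIn (G : SimpleGraph V) (cv : V → κ) (ce : V → V → κ) : Prop :=
  (∀ u v, G.Adj u v → ce u v = ce v u) ∧
  (∀ u v, G.Adj u v → cv u ≠ cv v) ∧
  (∀ u v w, G.Adj u v → G.Adj u w → v ≠ w → ce u v ≠ ce u w) ∧
  (∀ u v, G.Adj u v → ce u v ≠ cv u ∧ ce u v ≠ cv v)

lemma IsTotalColoringIn.exists_isTotalColoring {cv : V → κ} {ce : V → V → κ}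
    (h : IsTotalColoringIn G cv ce) {T : Finset κ} (hcv : ∀ v, cv v ∈ T)
    (hce : ∀ u v, G.Adj u v → ce u v ∈ T) {m : ℕ} (hm : T.card = m) :
    ∃ cv' ce', IsTotalColoring G m cv' ce' := by
  classical
  let e := T.equivFin.trans (finCongr hm)
  have he {a b : κ} (ha : a ∈ T) (hb : b ∈ T) (hab : a ≠ b) : e ⟨a, ha⟩ ≠ e ⟨b, hb⟩ :=
    e.injective.ne (by simpa using hab)
  obtain ⟨hsymm, hvert, hedge, hinc⟩ := h
  refine ⟨fun v => e ⟨cv v, hcv v⟩,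
    fun u v => if huv : G.Adj u v then e ⟨ce u v, hce u v huv⟩ else e ⟨cv u, hcv u⟩,
    fun u v huv => ?_, fun u v huv => he _ _ (hvert u v huv),
    fun u v w huv huw hvw => ?_, fun u v huv => ?_⟩
  · simp [huv, huv.symm, hsymm u v huv]
  · simp only [dif_pos huv, dif_pos huw]
    exact he _ _ (hedge u v w huv huw hvw)
  · simp only [dif_pos huv]
    exact ⟨he _ _ (hinc u v huv).1, he _ _ (hinc u v huv).2⟩

variable [Fintype V] [DecidableRel G.Adj]

lemma IsTotalColoring.degree_lt {m : ℕ} {cv : V → Fin m} {ce : V → V → Fin m}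
    (h : IsTotalColoring G m cv ce) (v : V) : G.degree v < m := by
  have hmaps : ∀ u ∈ G.neighborFinset v, ce v u ∈ Finset.univ.erase (cv v) := fun u hu =>
    Finset.mem_erase.mpr ⟨(h.2.2.2 v u ((G.mem_neighborFinset v u).mp hu)).1, Finset.mem_univ _⟩
  have hinj : Set.InjOn (ce v) (G.neighborFinset v) := fun u hu u' hu' huu' => by
    by_contra hne
    exact h.2.2.1 v u u' (by simpa using hu) (by simpa using hu') hne huu'
  have := Finset.card_le_card_of_injOn _ hmaps hinj
  rw [Finset.card_erase_of_mem (Finset.mem_univ _), Finset.card_univ, Fintype.card_fin] at this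
  have := (cv v).pos
  rw [← card_neighborFinset_eq_degree]
  omega

lemma totalChromaticNumber_eq_degree_add_one {v : V} {cv : V → Fin (G.degree v + 1)}
    {ce : V → V → Fin (G.degree v + 1)} (h : IsTotalColoring G (G.degree v + 1) cv ce) :
    totalChromaticNumber G = G.degree v + 1 :=
  le_antisymm (Nat.sInf_le ⟨cv, ce, h⟩)
    (le_csInf ⟨_, cv, ce, h⟩ fun _ ⟨_, _, h'⟩ => h'.degree_lt v)

end TotalColoring

lemma tensorProd_degree [Fintype V] [Fintype W] (G : SimpleGraph V) (H : SimpleGraph W)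
    [DecidableRel G.Adj] [DecidableRel H.Adj] (v : V) (w : W) :
    (tensorProd G H).degree (v, w) = G.degree v * H.degree w := by
  rw [← card_neighborFinset_eq_degree, ← card_neighborFinset_eq_degree,
    ← card_neighborFinset_eq_degree, ← Finset.card_product]
  congr 1
  ext ⟨v', w'⟩
  simp only [mem_neighborFinset, Finset.mem_product]
  rfl

section ProductColoring

variable {n Δ : ℕ} [NeZero Δ] {H : SimpleGraph W} {x : W → W → Fin Δ}
  {S : Fin n → Fin n → Fin n}

def productArcColor (x : W → W → Fin Δ) (S : Fin n → Fin n → Fin n) (u v : Fin n × W) :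
    Fin Δ × Fin n :=
  (x u.2 v.2, if x u.2 v.2 = 0 then S u.1 v.1 else v.1 - u.1)

def productEdgeColor (c : W → Fin 2) (x : W → W → Fin Δ) (S : Fin n → Fin n → Fin n)
    (u v : Fin n × W) : Fin Δ × Fin n :=
  if c u.2 = 0 then productArcColor x S u v else productArcColor x S v u

def productVertexColor (S : Fin n → Fin n → Fin n) (v : Fin n × W) : Fin Δ × Fin n :=
  (0, S v.1 v.1)

def productColors (Δ n : ℕ) [NeZero Δ] [NeZero n] : Finset (Fin Δ × Fin n) :=
  {p | p.1 = 0 ∨ p.2 ≠ 0}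

lemma card_productColors [NeZero n] : (productColors Δ n).card = (n - 1) * Δ + 1 := by
  have hcompl : (Finset.univ.filter fun p : Fin Δ × Fin n => ¬(p.1 = 0 ∨ p.2 ≠ 0)) =
      ((Finset.univ : Finset (Fin Δ)).erase 0) ×ˢ ({0} : Finset (Fin n)) := by
    ext p
    simp only [Finset.mem_filter, Finset.mem_univ, true_and, Finset.mem_product,
      Finset.mem_erase, Finset.mem_singleton]
    tauto
  have := Finset.card_filter_add_card_filter_not (s := Finset.univ)
    fun p : Fin Δ × Fin n => p.1 = 0 ∨ p.2 ≠ 0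
  rw [hcompl, Finset.card_product, Finset.card_erase_of_mem (Finset.mem_univ _)] at this
  simp only [Finset.card_univ, Fintype.card_prod, Fintype.card_fin, Finset.card_singleton,
    mul_one] at this
  obtain ⟨d, rfl⟩ := Nat.exists_eq_succ_of_ne_zero (NeZero.ne Δ)
  obtain ⟨m, rfl⟩ := Nat.exists_eq_succ_of_ne_zero (NeZero.ne n)
  simp only [Nat.succ_sub_one] at this ⊢
  unfold productColors
  linarith

lemma productVertexColor_mem [NeZero n] (v : Fin n × W) :
    productVertexColor S v ∈ productColors Δ n := by
  simp [productVertexColor, productColors]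

lemma productArcColor_mem [NeZero n] {u v : Fin n × W} (h : u.1 ≠ v.1) :
    productArcColor x S u v ∈ productColors Δ n := by
  by_cases hx : x u.2 v.2 = 0 <;> simp [productColors, productArcColor, hx, sub_eq_zero, h.symm]

lemma productEdgeColor_mem [NeZero n] (c : W → Fin 2) {u v : Fin n × W} (h : u.1 ≠ v.1) :
    productEdgeColor c x S u v ∈ productColors Δ n := by
  unfold productEdgeColor
  split_ifs
  exacts [productArcColor_mem h, productArcColor_mem h.symm]

lemma productArcColor_ne_productVertexColor (hS : IsLatinSquareWithTransversalDiagonal S)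
    {u v : Fin n × W} (h : u.1 ≠ v.1) :
    productArcColor x S u v ≠ productVertexColor S u ∧
      productArcColor x S u v ≠ productVertexColor S v := by
  constructor <;> intro huv <;>
    simp only [productArcColor, productVertexColor, Prod.mk.injEq] at huv <;>
    obtain ⟨hx0, hy⟩ := huv <;> simp only [hx0, if_true] at hy
  exacts [h (hS.row_injective _ hy).symm, h (hS.col_injective _ hy)]

variable (hx : IsEdgeColoring H Δ x) (hS : IsLatinSquareWithTransversalDiagonal S)
include hx hS

lemma productArcColor_ne_of_tail [NeZero n] {u v v' : Fin n × W} (hv : H.Adj u.2 v.2)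
    (hv' : H.Adj u.2 v'.2) (hvv' : v ≠ v') :
    productArcColor x S u v ≠ productArcColor x S u v' := by
  intro h
  have h2 : v.2 = v'.2 := by
    by_contra hne
    exact hx.2 _ _ _ hv hv' hne (congrArg Prod.fst h)
  refine hvv' (Prod.ext ?_ h2)
  simp only [productArcColor, h2, Prod.mk.injEq, true_and] at h
  split_ifs at h
  exacts [hS.row_injective _ h, sub_left_injective h]

lemma productArcColor_ne_of_head [NeZero n] {u v v' : Fin n × W} (hv : H.Adj v.2 u.2)
    (hv' : H.Adj v'.2 u.2) (hvv' : v ≠ v') :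
    productArcColor x S v u ≠ productArcColor x S v' u := by
  intro h
  have h2 : v.2 = v'.2 := by
    by_contra hne
    refine hx.2 _ _ _ hv.symm hv'.symm hne ?_
    rw [← hx.1 _ _ hv, ← hx.1 _ _ hv']
    exact congrArg Prod.fst h
  refine hvv' (Prod.ext ?_ h2)
  simp only [productArcColor, h2, Prod.mk.injEq, true_and] at h
  split_ifs at h
  exacts [hS.col_injective _ h, sub_right_injective h]

theorem isTotalColoringIn_tensorProd [NeZero n] (c : H.Coloring (Fin 2)) :
    IsTotalColoringIn (tensorProd ⊤ H) (productVertexColor S) (productEdgeColor c x S) := by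
  refine ⟨fun u v huv => ?_, fun u v huv => ?_, fun u v v' huv huv' hvv' => ?_,
    fun u v huv => ?_⟩
  · by_cases hu : c u.2 = 0
    · simp [productEdgeColor, hu, (c.eq_zero_iff_ne_zero huv.2).mp hu]
    · simp [productEdgeColor, hu, (c.eq_zero_iff_ne_zero huv.2.symm).mpr hu]
  · exact huv.1 ∘ fun h => hS.diag_injective (congrArg Prod.snd h)
  · by_cases hu : c u.2 = 0 <;> simp only [productEdgeColor, hu, if_true, if_false]
    · exact productArcColor_ne_of_tail hx hS huv.2 huv'.2 hvv'
    · exact productArcColor_ne_of_head hx hS huv.2.symm huv'.2.symm hvv'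
  · by_cases hu : c u.2 = 0 <;> simp only [productEdgeColor, hu, if_true, if_false]
    · exact productArcColor_ne_productVertexColor hS huv.1
    · exact (productArcColor_ne_productVertexColor hS (Ne.symm huv.1)).symm

end ProductColoring

theorem Kn_tensor_bipartite_typeI [Fintype W] (n : ℕ) (hn : 3 ≤ n) (H : SimpleGraph W)
    [DecidableRel H.Adj] (hH : H.Colorable 2) (hedge : ∃ x y, H.Adj x y) :
    totalChromaticNumber (tensorProd (⊤ : SimpleGraph (Fin n)) H) =
      (n - 1) * H.maxDegree + 1 := by
  set G := tensorProd (⊤ : SimpleGraph (Fin n)) H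
  obtain ⟨w, w', hww'⟩ := hedge
  have : NeZero n := ⟨by omega⟩
  have : NeZero H.maxDegree := ⟨((H.degree_pos_iff_exists_adj w).mpr ⟨w', hww'⟩).trans_le
    (H.degree_le_maxDegree w) |>.ne'⟩
  have : Nonempty W := ⟨w⟩
  obtain ⟨w₀, hw₀⟩ := H.exists_maximal_degree_vertex
  have hdeg : G.degree (0, w₀) = (n - 1) * H.maxDegree := by
    rw [tensorProd_degree, complete_graph_degree, Fintype.card_fin, hw₀]
  obtain ⟨x, hx⟩ := exists_isEdgeColoring_of_colorable_two hH le_rfl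
  obtain ⟨S, hS⟩ := exists_isLatinSquareWithTransversalDiagonal (show n ≠ 2 by omega)
  obtain ⟨c⟩ := hH
  obtain ⟨cv, ce, h⟩ := (isTotalColoringIn_tensorProd hx hS c).exists_isTotalColoring
    productVertexColor_mem (fun _ _ huv => productEdgeColor_mem c huv.1)
    (m := G.degree (0, w₀) + 1) (by rw [card_productColors, hdeg])
  rw [← hdeg]
  exact totalChromaticNumber_eq_degree_add_one h
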